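/- Let n ∈ ℕ and let g : ℝ → ℝ be nonnegative and nondecreasing on the interval [3π/2 + 2nπ, 7π/2 + 2nπ]. Then ∫_{3π/2 + 2nπ}^{7π/2 + 2nπ} g(u) cos(u) du ≤ 0. -/

import Mathlib

/-!
Since `cos (u - π) = -cos u`, the substitution `u ↦ u - π` folds the first half of the period onto
the second, turning the integral into `∫ (g u - g (u - π)) cos u` over `[5π/2 + 2nπ, 7π/2 + 2nπ]`.
There the first factor is nonnegative by monotonicity and `cos` is nonpositive.
-/

open Real MeasureTheory

theorem intervalIntegral_mul_antiperiodic_eq_integral_sub_shift {f h : ℝ → ℝ} {a p : ℝ}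
    (hh : Function.Antiperiodic h p) (hh_cont : Continuous h)
    (hf₁ : IntervalIntegrable f volume a (a + p))
    (hf₂ : IntervalIntegrable f volume (a + p) (a + 2 * p)) :
    ∫ u in a..a + 2 * p, f u * h u = ∫ u in a + p..a + 2 * p, (f u - f (u - p)) * h u := by
  have hend : a + 2 * p - p = a + p := by ring
  have hshift_int : IntervalIntegrable (fun u => f (u - p)) volume (a + p) (a + 2 * p) := by
    rw [show a + 2 * p = a + p + p by ring]
    exact hf₁.comp_sub_right p
  have hshift : ∫ u in a..a + p, f u * h u = -∫ u in a + p..a + 2 * p, f (u - p) * h u := by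
    rw [← intervalIntegral.integral_neg]
    have hflip : ∀ u, -(f (u - p) * h u) = f (u - p) * h (u - p) := fun u => by
      rw [hh.sub_eq]; ring
    simp_rw [hflip]
    rw [intervalIntegral.integral_comp_sub_right (fun u => f u * h u), add_sub_cancel_right, hend]
  rw [← intervalIntegral.integral_add_adjacent_intervals (hf₁.mul_continuousOn hh_cont.continuousOn)
    (hf₂.mul_continuousOn hh_cont.continuousOn), hshift, neg_add_eq_sub,
    ← intervalIntegral.integral_sub (hf₂.mul_continuousOn hh_cont.continuousOn)
      (hshift_int.mul_continuousOn hh_cont.continuousOn)]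
  simp_rw [sub_mul]

theorem intervalIntegral_mul_antiperiodic_nonpos_of_monotoneOn {f h : ℝ → ℝ} {a p : ℝ}
    (hp : 0 ≤ p) (hf : MonotoneOn f (Set.Icc a (a + 2 * p)))
    (hh : Function.Antiperiodic h p) (hh_cont : Continuous h)
    (hh_nonpos : ∀ u ∈ Set.Icc (a + p) (a + 2 * p), h u ≤ 0) :
    ∫ u in a..a + 2 * p, f u * h u ≤ 0 := by
  have hf₁ : MonotoneOn f (Set.uIcc a (a + p)) :=
    hf.mono (by rw [Set.uIcc_of_le (by linarith)]; exact Set.Icc_subset_Icc le_rfl (by linarith))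
  have hf₂ : MonotoneOn f (Set.uIcc (a + p) (a + 2 * p)) :=
    hf.mono (by rw [Set.uIcc_of_le (by linarith)]; exact Set.Icc_subset_Icc (by linarith) le_rfl)
  rw [intervalIntegral_mul_antiperiodic_eq_integral_sub_shift hh hh_cont hf₁.intervalIntegrable
    hf₂.intervalIntegrable, ← neg_nonneg, ← intervalIntegral.integral_neg]
  refine intervalIntegral.integral_nonneg (by linarith) fun u hu => ?_
  have hgrowth : f (u - p) ≤ f u :=
    hf ⟨by linarith [hu.1], by linarith [hu.2]⟩ ⟨by linarith [hu.1], hu.2⟩ (by linarith)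
  exact neg_nonneg.2 (mul_nonpos_of_nonneg_of_nonpos (sub_nonneg.2 hgrowth) (hh_nonpos u hu))

theorem integral_mul_cos_nonpos_of_monotoneOn_shifted (n : ℕ) (g : ℝ → ℝ)
    (hmono : MonotoneOn g (Set.Icc (3 * π / 2 + 2 * n * π) (7 * π / 2 + 2 * n * π))) :
    (∫ u in (3 * π / 2 + 2 * n * π)..(7 * π / 2 + 2 * n * π), g u * Real.cos u) ≤ 0 := by
  have hend : 7 * π / 2 + 2 * n * π = 3 * π / 2 + 2 * n * π + 2 * π := by ring
  rw [hend] at hmono ⊢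
  refine intervalIntegral_mul_antiperiodic_nonpos_of_monotoneOn pi_pos.le hmono cos_antiperiodic
    continuous_cos fun u hu => ?_
  rw [← cos_sub_nat_mul_two_pi u (n + 1)]
  push_cast
  exact cos_nonpos_of_pi_div_two_le_of_le (by linarith [hu.1]) (by linarith [hu.2])
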